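/- arXiv:1003.3498 — 5 statements merged into one kernel-verified Lean document; each statement's English description precedes it below -/
import Mathlib

section
/- Let $F$ be a finite set and let $(X_i)_{i\in F}$, $(X'_i)_{i\in F}$, and $(X_{j(i)})_{i,j\in F}$ be collections of nonnegative random variables with finite moment generating functions, defined on the same probability space, satisfying: (a) for all $i$, $X_i \le X'_i$; (b) for all $i$, the random variables $X'_i$ and $\sum_{j\in F} X_{j(i)}$ are independent; (c) for all $i$, $\sum_{j\in F} X_{j(i)} \le \sum_{j\in F} X_j$; (d) there is a constant $a > 0$ such that for all $i$, on the event $\{X_i > 0\}$ one has $\sum_{j\in F} X_j \le a + \sum_{j\in F} X_{j(i)}$. Let $\lambda := \sum_{i\in F} \mathbb{E}(X'_i)$. Then for any $t > 0$, $\mathbb{P}\big(\sum_{i\in F} X_i \ge t\big) \le \exp\big(-\frac{t}{a}\log\frac{t}{3\lambda}\big)$. -/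
/-!
Write `S = ∑ i, X i` and `M θ = 𝔼[exp (θ S)]`. On `{X i > 0}` condition (d) gives
`exp (θ S) ≤ exp (θ a) exp (θ ∑ j, X_{j(i)})`, so by (a), the independence (b) and then (c),
`M' θ = ∑ i, 𝔼[X i exp (θ S)] ≤ exp (θ a) ∑ i, 𝔼[X' i] 𝔼[exp (θ ∑ j, X_{j(i)})] ≤ λ exp (θ a) M θ`.
Integrating this differential inequality from `M 0 = 1` gives
`M θ ≤ exp (λ (exp (θ a) - 1) / a)`, and the Chernoff bound at `θ = log (t / λ) / a` yields
`exp (-(t / a) (log (t / λ) - 1) - λ / a)`, which is below the claim because `log 3 ≥ 1`.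
-/

open MeasureTheory ProbabilityTheory Real Set Filter

lemma le_mul_exp_sub_of_hasDerivAt_le_mul {f f' g g' : ℝ → ℝ} {a b : ℝ} (hab : a ≤ b)
    (hf : ∀ x ∈ Icc a b, HasDerivAt f (f' x) x) (hg : ∀ x ∈ Icc a b, HasDerivAt g (g' x) x)
    (hfg : ∀ x ∈ Ioo a b, f' x ≤ g' x * f x) :
    f b ≤ f a * exp (g b - g a) := by
  have hH : ∀ x ∈ Icc a b,
      HasDerivAt (fun x => f x * exp (-g x)) ((f' x - g' x * f x) * exp (-g x)) x := by
    intro x hx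
    refine ((hf x hx).mul (hg x hx).neg.exp).congr_deriv ?_
    simp only [Pi.neg_apply]
    ring
  have hanti : AntitoneOn (fun x => f x * exp (-g x)) (Icc a b) := by
    refine antitoneOn_of_hasDerivWithinAt_nonpos (f' := fun x => (f' x - g' x * f x) * exp (-g x))
      (convex_Icc a b)
      (fun x hx => (hH x hx).continuousAt.continuousWithinAt) (fun x hx => ?_) (fun x hx => ?_)
    · rw [interior_Icc] at hx
      exact (hH x (Ioo_subset_Icc_self hx)).hasDerivWithinAt
    · rw [interior_Icc] at hx
      exact mul_nonpos_of_nonpos_of_nonneg (sub_nonpos.2 (hfg x hx)) (exp_nonneg _)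
  calc f b = f b * exp (-g b) * exp (g b) := by
        rw [mul_assoc, ← exp_add, neg_add_cancel, exp_zero, mul_one]
    _ ≤ f a * exp (-g a) * exp (g b) :=
        mul_le_mul_of_nonneg_right (hanti (left_mem_Icc.2 hab) (right_mem_Icc.2 hab) hab)
          (exp_nonneg _)
    _ = f a * exp (g b - g a) := by rw [mul_assoc, ← exp_add, neg_add_eq_sub]

lemma integrable_exp_mul_sum {Ω ι : Type*} [MeasurableSpace Ω] {μ : Measure Ω}
    [IsFiniteMeasure μ] [Fintype ι] {X : ι → Ω → ℝ} {θ : ℝ} (hθ : 0 ≤ θ)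
    (hX : ∀ i, AEMeasurable (X i) μ)
    (hint : ∀ i, Integrable (fun ω => exp (Fintype.card ι * θ * X i ω)) μ) :
    Integrable (fun ω => exp (θ * ∑ i, X i ω)) μ := by
  cases isEmpty_or_nonempty ι
  · simp
  refine (integrable_finsetSum Finset.univ fun i _ => hint i).mono'
    (aemeasurable_exp_mul θ (Finset.aemeasurable_fun_sum _ fun i _ => hX i))
    (Eventually.of_forall fun ω => ?_)
  obtain ⟨j, -, hj⟩ := Finset.exists_max_image Finset.univ (fun i => X i ω) Finset.univ_nonempty
  have hsum : ∑ i, X i ω ≤ Fintype.card ι * X j ω := by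
    simpa using Finset.sum_le_sum fun i (_ : i ∈ Finset.univ) => hj i (Finset.mem_univ i)
  rw [norm_of_nonneg (exp_nonneg _)]
  calc exp (θ * ∑ i, X i ω) ≤ exp (Fintype.card ι * θ * X j ω) :=
        exp_le_exp.2 <| (mul_le_mul_of_nonneg_left hsum hθ).trans_eq (by ring)
    _ ≤ ∑ i, exp (Fintype.card ι * θ * X i ω) :=
        Finset.single_le_sum (f := fun i => exp (Fintype.card ι * θ * X i ω))
          (fun i _ => exp_nonneg _) (Finset.mem_univ j)

lemma integrableExpSet_eq_univ_of_nonneg {Ω : Type*} [MeasurableSpace Ω] {μ : Measure Ω}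
    [IsFiniteMeasure μ] {X : Ω → ℝ} (hX : 0 ≤ᵐ[μ] X)
    (hint : ∀ θ, 0 ≤ θ → Integrable (fun ω => exp (θ * X ω)) μ) :
    integrableExpSet X μ = univ := by
  refine eq_univ_of_forall fun θ => ?_
  rcases le_total 0 θ with hθ | hθ
  · exact hint θ hθ
  have hmeas := aemeasurable_of_aemeasurable_exp_mul one_ne_zero (hint 1 zero_le_one).aemeasurable
  show Integrable _ μ
  simpa only [Pi.neg_apply, neg_mul_neg] using
    integrable_exp_mul_of_le (-θ) 0 (neg_nonneg.2 hθ) hmeas.neg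
      (by filter_upwards [hX] with ω hω using neg_nonpos.2 hω)

lemma sum_mul_exp_sum_le {ι : Type*} [Fintype ι] {x x' y : ι → ℝ} {a θ : ℝ} (hθ : 0 ≤ θ)
    (hxx' : ∀ i, x i ≤ x' i) (hx' : ∀ i, 0 ≤ x' i) (hxy : ∀ i, 0 < x i → ∑ j, x j ≤ a + y i) :
    (∑ i, x i) * exp (θ * ∑ i, x i) ≤ exp (θ * a) * ∑ i, x' i * exp (θ * y i) := by
  rw [Finset.sum_mul, Finset.mul_sum _ _ (exp (θ * a))]
  refine Finset.sum_le_sum fun i _ => ?_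
  rcases le_or_gt (x i) 0 with hxi | hxi
  · have := hx' i
    exact (mul_nonpos_of_nonpos_of_nonneg hxi (exp_nonneg _)).trans (by positivity)
  calc x i * exp (θ * ∑ j, x j) ≤ x' i * exp (θ * (a + y i)) := by
        gcongr
        exacts [hx' i, hxx' i, hxy i hxi]
    _ = exp (θ * a) * (x' i * exp (θ * y i)) := by rw [mul_add, exp_add]; ring

section

variable {Ω F : Type*} [MeasurableSpace Ω] {μ : Measure Ω} [Fintype F] {X X' Y : F → Ω → ℝ}
  {a θ : ℝ}

lemma integral_sum_mul_exp_sum_le (hθ : 0 ≤ θ) (hX : ∀ i ω, 0 ≤ X i ω) (hX' : ∀ i ω, 0 ≤ X' i ω)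
    (hX'int : ∀ i, Integrable (X' i) μ) (hY : ∀ i, AEMeasurable (Y i) μ)
    (hS : Integrable (fun ω => exp (θ * ∑ i, X i ω)) μ) (hXX' : ∀ i ω, X i ω ≤ X' i ω)
    (hindep : ∀ i, IndepFun (X' i) (Y i) μ) (hYS : ∀ i ω, Y i ω ≤ ∑ j, X j ω)
    (hSY : ∀ i ω, 0 < X i ω → ∑ j, X j ω ≤ a + Y i ω) :
    ∫ ω, (∑ i, X i ω) * exp (θ * ∑ i, X i ω) ∂μ ≤
      (∑ i, ∫ ω, X' i ω ∂μ) * exp (θ * a) * mgf (fun ω => ∑ i, X i ω) μ θ := by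
  have hindep_exp : ∀ i, IndepFun (X' i) (fun ω => exp (θ * Y i ω)) μ := fun i =>
    (hindep i).comp measurable_id (measurable_exp.comp (measurable_const_mul θ))
  have hYint : ∀ i, Integrable (fun ω => exp (θ * Y i ω)) μ := fun i =>
    hS.mono' (aemeasurable_exp_mul θ (hY i)) (Eventually.of_forall fun ω => by
      rw [norm_of_nonneg (exp_nonneg _)]
      gcongr
      exact hYS i ω)
  have hprod_int : ∀ i, Integrable (fun ω => X' i ω * exp (θ * Y i ω)) μ := fun i =>
    (hindep_exp i).integrable_mul (hX'int i) (hYint i)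
  have hprod : ∀ i, ∫ ω, X' i ω * exp (θ * Y i ω) ∂μ = (∫ ω, X' i ω ∂μ) * mgf (Y i) μ θ :=
    fun i => (hindep_exp i).integral_fun_mul_eq_mul_integral (hX'int i).aestronglyMeasurable
      (hYint i).aestronglyMeasurable
  calc ∫ ω, (∑ i, X i ω) * exp (θ * ∑ i, X i ω) ∂μ
      ≤ ∫ ω, exp (θ * a) * ∑ i, X' i ω * exp (θ * Y i ω) ∂μ :=
        integral_mono_of_nonneg
          (Eventually.of_forall fun ω =>
            mul_nonneg (Finset.sum_nonneg fun i _ => hX i ω) (exp_nonneg _))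
          ((integrable_finsetSum _ fun i _ => hprod_int i).const_mul _)
          (Eventually.of_forall fun ω =>
            sum_mul_exp_sum_le hθ (hXX' · ω) (hX' · ω) (hSY · ω))
    _ = exp (θ * a) * ∑ i, (∫ ω, X' i ω ∂μ) * mgf (Y i) μ θ := by
        rw [integral_const_mul, integral_finsetSum _ fun i _ => hprod_int i]
        simp only [hprod]
    _ ≤ exp (θ * a) * ∑ i, (∫ ω, X' i ω ∂μ) * mgf (fun ω => ∑ i, X i ω) μ θ := by
        gcongr with i
        · exact integral_nonneg (hX' i)
        · exact mgf_mono_of_nonneg (Eventually.of_forall (hYS i)) hθ hS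
    _ = (∑ i, ∫ ω, X' i ω ∂μ) * exp (θ * a) * mgf (fun ω => ∑ i, X i ω) μ θ := by
        rw [← Finset.sum_mul]
        ring

lemma mgf_sum_le_exp [IsProbabilityMeasure μ] (ha : 0 < a) (hθ : 0 ≤ θ) (hX : ∀ i ω, 0 ≤ X i ω)
    (hX' : ∀ i ω, 0 ≤ X' i ω) (hX'int : ∀ i, Integrable (X' i) μ)
    (hY : ∀ i, AEMeasurable (Y i) μ)
    (hS : ∀ η, 0 ≤ η → Integrable (fun ω => exp (η * ∑ i, X i ω)) μ)
    (hXX' : ∀ i ω, X i ω ≤ X' i ω) (hindep : ∀ i, IndepFun (X' i) (Y i) μ)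
    (hYS : ∀ i ω, Y i ω ≤ ∑ j, X j ω) (hSY : ∀ i ω, 0 < X i ω → ∑ j, X j ω ≤ a + Y i ω) :
    mgf (fun ω => ∑ i, X i ω) μ θ ≤
      exp ((∑ i, ∫ ω, X' i ω ∂μ) / a * (exp (θ * a) - 1)) := by
  set lam := ∑ i, ∫ ω, X' i ω ∂μ
  have hset : integrableExpSet (fun ω => ∑ i, X i ω) μ = univ :=
    integrableExpSet_eq_univ_of_nonneg
      (Eventually.of_forall fun ω => Finset.sum_nonneg fun i _ => hX i ω) hS
  have hψ : ∀ x, HasDerivAt (fun x => lam / a * (exp (x * a) - 1)) (lam * exp (x * a)) x :=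
    fun x => ((((hasDerivAt_mul_const a).exp).sub_const 1).const_mul (lam / a)).congr_deriv
      (by field_simp)
  simpa using le_mul_exp_sub_of_hasDerivAt_le_mul hθ
    (fun x _ => hasDerivAt_mgf (by simp [hset])) (fun x _ => hψ x)
    (fun x hx => integral_sum_mul_exp_sum_le hx.1.le hX hX' hX'int hY (hS x hx.1.le) hXX' hindep
      hYS hSY)

end

lemma exp_neg_mul_add_le_exp_neg_mul_log {a t lam : ℝ} (ha : 0 < a) (hlam : 0 < lam)
    (ht : 0 < t) :
    exp (-(log (t / lam) / a) * t) * exp (lam / a * (exp (log (t / lam) / a * a) - 1)) ≤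
      exp (-(t / a) * log (t / (3 * lam))) := by
  have hlog3 : 1 ≤ log 3 := by
    rw [le_log_iff_exp_le (by norm_num)]
    linarith [exp_one_lt_d9]
  rw [← exp_add, exp_le_exp, div_mul_cancel₀ _ ha.ne', exp_log (div_pos ht hlam),
    log_div ht.ne' hlam.ne', log_div ht.ne' (by positivity : 3 * lam ≠ 0),
    log_mul (by norm_num) hlam.ne', ← sub_nonneg]
  have key : -(t / a) * (log t - (log 3 + log lam)) -
      (-((log t - log lam) / a) * t + lam / a * (t / lam - 1)) = (t * log 3 - t + lam) / a := by
    field_simp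
    ring
  rw [key]
  exact div_nonneg (by nlinarith) ha.le

theorem dependent_sum_tail'_general {Ω : Type*} [MeasurableSpace Ω] (μ : Measure Ω)
    [IsProbabilityMeasure μ] {F : Type*} [Fintype F]
    (X X' : F → Ω → ℝ) (Xc : F → F → Ω → ℝ)
    (hXnn : ∀ i ω, 0 ≤ X i ω) (hX'nn : ∀ i ω, 0 ≤ X' i ω)
    (hmgfX : ∀ i, ∀ θ : ℝ, 0 ≤ θ → Integrable (fun ω => Real.exp (θ * X i ω)) μ)
    (hmgfX' : ∀ i, ∀ θ : ℝ, 0 ≤ θ → Integrable (fun ω => Real.exp (θ * X' i ω)) μ)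
    (hmgfXc : ∀ i j, ∀ θ : ℝ, 0 ≤ θ → Integrable (fun ω => Real.exp (θ * Xc i j ω)) μ)
    (ha : ∀ i ω, X i ω ≤ X' i ω)
    (hb : ∀ i, IndepFun (X' i) (fun ω => ∑ j, Xc i j ω) μ)
    (hc : ∀ i ω, ∑ j, Xc i j ω ≤ ∑ j, X j ω)
    (a : ℝ) (hapos : 0 < a)
    (hd : ∀ i ω, 0 < X i ω → ∑ j, X j ω ≤ a + ∑ j, Xc i j ω)
    (lam : ℝ) (hlam : lam = ∑ i, ∫ ω, X' i ω ∂μ)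
    (t : ℝ) (ht : 0 < t) :
    μ {ω | t ≤ ∑ i, X i ω} ≤
      ENNReal.ofReal (Real.exp (-(t / a) * Real.log (t / (3 * lam)))) := by
  have hlam_nn : 0 ≤ lam := hlam ▸ Finset.sum_nonneg fun i _ => integral_nonneg (hX'nn i)
  rcases le_or_gt (log (t / (3 * lam))) 0 with hL | hL
  · exact prob_le_one.trans (ENNReal.one_le_ofReal.2 (one_le_exp
      (mul_nonneg_of_nonpos_of_nonpos (neg_nonpos.2 (div_pos ht hapos).le) hL)))
  -- `lam = 0` lands in the first case through the junk value `log (t / 0) = log 0 = 0`.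
  have hlam_pos : 0 < lam := hlam_nn.lt_of_ne (by rintro rfl; simp at hL)
  have h3lam : 3 * lam < t := (one_lt_div (by positivity)).1 ((log_pos_iff (by positivity)).1 hL)
  have hθ : 0 ≤ log (t / lam) / a :=
    div_nonneg (log_nonneg ((one_le_div hlam_pos).2 (by linarith))) hapos.le
  have hS : ∀ θ, 0 ≤ θ → Integrable (fun ω => exp (θ * ∑ i, X i ω)) μ := fun θ hθ =>
    integrable_exp_mul_sum hθ (fun i => aemeasurable_of_aemeasurable_exp_mul one_ne_zero
      (hmgfX i 1 zero_le_one).aemeasurable) fun i => hmgfX i _ (by positivity)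
  have hX'int : ∀ i, Integrable (X' i) μ := fun i => integrable_of_mem_interior_integrableExpSet
    (by simp [integrableExpSet_eq_univ_of_nonneg (Eventually.of_forall (hX'nn i)) (hmgfX' i)])
  have hY : ∀ i, AEMeasurable (fun ω => ∑ j, Xc i j ω) μ := fun i =>
    Finset.aemeasurable_fun_sum _ fun j _ => aemeasurable_of_aemeasurable_exp_mul one_ne_zero
      (hmgfXc i j 1 zero_le_one).aemeasurable
  have hmgf := mgf_sum_le_exp hapos hθ hXnn hX'nn hX'int hY hS ha hb hc hd
  rw [← hlam] at hmgf
  rw [← ofReal_measureReal]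
  gcongr
  calc μ.real {ω | t ≤ ∑ i, X i ω}
      ≤ exp (-(log (t / lam) / a) * t) * mgf (fun ω => ∑ i, X i ω) μ (log (t / lam) / a) :=
        measure_ge_le_exp_mul_mgf t hθ (hS _ hθ)
    _ ≤ exp (-(log (t / lam) / a) * t) *
          exp (lam / a * (exp (log (t / lam) / a * a) - 1)) := by gcongr
    _ ≤ exp (-(t / a) * log (t / (3 * lam))) :=
        exp_neg_mul_add_le_exp_neg_mul_log hapos hlam_pos ht

/-- **Theorem 3.1** (second inequality): a generic concentration inequality for sums of
dependent nonnegative random variables. -/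
theorem dependent_sum_tail' {Ω : Type*} [MeasurableSpace Ω] (μ : Measure Ω)
    [IsProbabilityMeasure μ] {F : Type*} [Fintype F]
    (X X' : F → Ω → ℝ) (Xc : F → F → Ω → ℝ)
    (hXnn : ∀ i ω, 0 ≤ X i ω) (hX'nn : ∀ i ω, 0 ≤ X' i ω) (hXcnn : ∀ i j ω, 0 ≤ Xc i j ω)
    (hmgfX : ∀ i, ∀ θ : ℝ, 0 ≤ θ → Integrable (fun ω => Real.exp (θ * X i ω)) μ)
    (hmgfX' : ∀ i, ∀ θ : ℝ, 0 ≤ θ → Integrable (fun ω => Real.exp (θ * X' i ω)) μ)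
    (hmgfXc : ∀ i j, ∀ θ : ℝ, 0 ≤ θ → Integrable (fun ω => Real.exp (θ * Xc i j ω)) μ)
    (ha : ∀ i ω, X i ω ≤ X' i ω)
    (hb : ∀ i, IndepFun (X' i) (fun ω => ∑ j, Xc i j ω) μ)
    (hc : ∀ i ω, ∑ j, Xc i j ω ≤ ∑ j, X j ω)
    (a : ℝ) (hapos : 0 < a)
    (hd : ∀ i ω, 0 < X i ω → ∑ j, X j ω ≤ a + ∑ j, Xc i j ω)
    (lam : ℝ) (hlam : lam = ∑ i, ∫ ω, X' i ω ∂μ)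
    (t : ℝ) (ht : 0 < t) :
    μ {ω | t ≤ ∑ i, X i ω} ≤
      ENNReal.ofReal (Real.exp (-(t / a) * Real.log (t / (3 * lam)))) :=
  dependent_sum_tail'_general μ X X' Xc hXnn hX'nn hmgfX hmgfX' hmgfXc ha hb hc a hapos hd lam hlam
    t ht
end

section
/- Suppose $X$ is a nonnegative random variable with a finite moment generating function, and $\lambda$ and $a$ are positive constants such that for any $\theta \ge 0$, $\mathbb{E}(X e^{\theta X}) \le \lambda e^{\theta a}\, \mathbb{E}(e^{\theta X})$. Then for every $\theta \ge 0$, the moment generating function satisfies $\mathbb{E}(e^{\theta X}) \le \exp\big(\frac{\lambda(e^{\theta a} - 1)}{a}\big)$. -/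
open MeasureTheory ProbabilityTheory Real Set

/-!
Herbst's argument: writing `M` for the moment generating function, the hypothesis says exactly
that `(log M)' ≤ λ e^{θa}`, the derivative of `G θ = λ (e^{θa} - 1) / a`. Hence `log M - G` is
antitone on `[0, ∞)` and vanishes at `0`, so `M ≤ exp G` there.
-/

theorem le_exp_of_hasDerivAt_le_mul {M M' G G' : ℝ → ℝ}
    (hM_cont : ContinuousOn M (Ici 0)) (hG_cont : ContinuousOn G (Ici 0))
    (hM : ∀ s, 0 < s → HasDerivAt M (M' s) s) (hG : ∀ s, 0 < s → HasDerivAt G (G' s) s)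
    (hM_pos : ∀ s, 0 ≤ s → 0 < M s) (hM' : ∀ s, 0 < s → M' s ≤ G' s * M s)
    (h₀ : M 0 ≤ exp (G 0)) {t : ℝ} (ht : 0 ≤ t) :
    M t ≤ exp (G t) := by
  have hanti : AntitoneOn (fun s ↦ log (M s) - G s) (Ici 0) := by
    refine antitoneOn_of_hasDerivWithinAt_nonpos (f' := fun s ↦ M' s / M s - G' s)
      (convex_Ici 0) ((hM_cont.log fun s hs ↦ (hM_pos s hs).ne').sub hG_cont) ?_ ?_
    · intro s hs
      rw [interior_Ici] at hs
      exact (((hM s hs).log (hM_pos s hs.le).ne').sub (hG s hs)).hasDerivWithinAt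
    · intro s hs
      rw [interior_Ici] at hs
      rw [sub_nonpos, div_le_iff₀ (hM_pos s hs.le)]
      exact hM' s hs
  have hlog₀ : log (M 0) ≤ G 0 := (log_le_iff_le_exp (hM_pos 0 le_rfl)).2 h₀
  have hlog : log (M t) - G t ≤ log (M 0) - G 0 := hanti self_mem_Ici ht ht
  exact (log_le_iff_le_exp (hM_pos t ht)).1 (by linarith)

theorem integrable_exp_mul_of_nonpos {Ω : Type*} [MeasurableSpace Ω] {μ : Measure Ω}
    [IsFiniteMeasure μ] {X : Ω → ℝ} (hX : AEMeasurable X μ) (hX_nonneg : 0 ≤ᵐ[μ] X)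
    {t : ℝ} (ht : t ≤ 0) :
    Integrable (fun ω ↦ exp (t * X ω)) μ := by
  refine (integrable_const 1).mono' (by fun_prop) ?_
  filter_upwards [hX_nonneg] with ω hω
  rw [norm_of_nonneg (exp_pos _).le, exp_le_one_iff]
  exact mul_nonpos_of_nonpos_of_nonneg ht hω

theorem hasDerivAt_mul_exp_mul_sub_one_div (lam a θ : ℝ) (ha : a ≠ 0) :
    HasDerivAt (fun θ ↦ lam * (exp (θ * a) - 1) / a) (lam * exp (θ * a)) θ := by
  have h := ((((hasDerivAt_id θ).mul_const a).exp.sub_const 1).const_mul lam).div_const a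
  simp only [id, one_mul] at h
  rwa [mul_div_assoc, mul_div_cancel_right₀ _ ha] at h

theorem mgf_bound_of_self_bound_general {Ω : Type*} [MeasurableSpace Ω] (μ : Measure Ω)
    [IsProbabilityMeasure μ] (X : Ω → ℝ) (hXnn : ∀ ω, 0 ≤ X ω)
    (hmgf : ∀ θ : ℝ, 0 ≤ θ → Integrable (fun ω => Real.exp (θ * X ω)) μ)
    (lam a : ℝ) (ha : 0 < a)
    (hyp : ∀ θ : ℝ, 0 ≤ θ →
      ∫ ω, X ω * Real.exp (θ * X ω) ∂μ ≤
        lam * Real.exp (θ * a) * ∫ ω, Real.exp (θ * X ω) ∂μ) :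
    ∀ θ : ℝ, 0 ≤ θ →
      ∫ ω, Real.exp (θ * X ω) ∂μ ≤ Real.exp (lam * (Real.exp (θ * a) - 1) / a) := by
  have hX : AEMeasurable X μ :=
    aemeasurable_of_integrable_exp_mul zero_ne_one (hmgf 0 le_rfl) (hmgf 1 zero_le_one)
  have hint : ∀ t, Integrable (fun ω ↦ exp (t * X ω)) μ := fun t ↦
    (le_total 0 t).elim (hmgf t) fun ht ↦
      integrable_exp_mul_of_nonpos hX (Filter.Eventually.of_forall hXnn) ht
  have hset : integrableExpSet X μ = univ := eq_univ_of_forall hint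
  have hG : ∀ s, HasDerivAt (fun θ ↦ lam * (exp (θ * a) - 1) / a) (lam * exp (s * a)) s :=
    fun s ↦ hasDerivAt_mul_exp_mul_sub_one_div lam a s ha.ne'
  intro θ hθ
  exact le_exp_of_hasDerivAt_le_mul (M := mgf X μ) (continuous_mgf hint).continuousOn
    (HasDerivAt.continuousOn fun s _ ↦ hG s) (fun s _ ↦ hasDerivAt_mgf (by simp [hset]))
    (fun s _ ↦ hG s) (fun s _ ↦ mgf_pos (hint s)) (fun s hs ↦ hyp s hs.le) (by simp) hθ

/-- **Intermediate step in Lemma 3.2**: a bound on the moment generating function from a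
self-bounding condition. -/
theorem mgf_bound_of_self_bound {Ω : Type*} [MeasurableSpace Ω] (μ : Measure Ω)
    [IsProbabilityMeasure μ] (X : Ω → ℝ) (hXnn : ∀ ω, 0 ≤ X ω)
    (hmgf : ∀ θ : ℝ, 0 ≤ θ → Integrable (fun ω => Real.exp (θ * X ω)) μ)
    (lam a : ℝ) (hlam : 0 < lam) (ha : 0 < a)
    (hyp : ∀ θ : ℝ, 0 ≤ θ →
      ∫ ω, X ω * Real.exp (θ * X ω) ∂μ ≤
        lam * Real.exp (θ * a) * ∫ ω, Real.exp (θ * X ω) ∂μ) :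
    ∀ θ : ℝ, 0 ≤ θ →
      ∫ ω, Real.exp (θ * X ω) ∂μ ≤ Real.exp (lam * (Real.exp (θ * a) - 1) / a) :=
  mgf_bound_of_self_bound_general μ X hXnn hmgf lam a ha hyp
end

section
/- Fix $\epsilon > 0$. Let $T$ denote the number of triangles in the Erdős–Rényi random graph $G(n,p)$ and let $T'$ denote the number of triangles in $G(n,p)$ all three of whose edges are good. There exists a positive constant $C(\epsilon)$ depending only on $\epsilon$ such that $\mathbb{P}(T' \ge \mathbb{E}(T) + \epsilon n^3 p^3) \le e^{-C(\epsilon) n^2 p^2 \log(1/p)}$ (for all $n$ and $0 < p < 1$ with $np$ sufficiently large depending on $\epsilon$). -/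
open MeasureTheory ProbabilityTheory Real
open scoped Classical ENNReal NNReal

/-- The Erdős–Rényi random graph measure: each (non-diagonal) unordered pair of vertices of
`Fin n` is an edge independently with probability `p`. The sample space records, for each
unordered pair, whether it is an edge. -/
noncomputable def erMeasure (n : ℕ) (p : ℝ≥0) (hp : p ≤ 1) :
    Measure (Sym2 (Fin n) → Bool) :=
  Measure.pi fun _ => (PMF.bernoulli p (by exact_mod_cast hp)).toMeasure

/-- Adjacency in the realization `ω`. -/
def Adj {n : ℕ} (ω : Sym2 (Fin n) → Bool) (u v : Fin n) : Prop :=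
  u ≠ v ∧ ω s(u, v) = true

/-- The degree of a vertex. -/
noncomputable def deg {n : ℕ} (ω : Sym2 (Fin n) → Bool) (u : Fin n) : ℕ :=
  (Finset.univ.filter (fun v => Adj ω u v)).card

/-- `t` is a triangle: a set of three pairwise adjacent vertices. -/
def IsTriangle {n : ℕ} (ω : Sym2 (Fin n) → Bool) (t : Finset (Fin n)) : Prop :=
  t.card = 3 ∧ ∀ u ∈ t, ∀ v ∈ t, u ≠ v → Adj ω u v

/-- The number of triangles. -/
noncomputable def triangleCount {n : ℕ} (ω : Sym2 (Fin n) → Bool) : ℕ :=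
  (Finset.univ.filter (fun t : Finset (Fin n) => IsTriangle ω t)).card

/-- `e` is an edge of the graph. -/
def IsEdge {n : ℕ} (ω : Sym2 (Fin n) → Bool) (e : Sym2 (Fin n)) : Prop :=
  ¬ e.IsDiag ∧ ω e = true

/-- The number of triangles containing both endpoints of `e`. -/
noncomputable def triOnEdge {n : ℕ} (ω : Sym2 (Fin n) → Bool) (e : Sym2 (Fin n)) : ℕ :=
  (Finset.univ.filter (fun t : Finset (Fin n) => IsTriangle ω t ∧ ∀ u ∈ e, u ∈ t)).card

/-- A good edge: an edge of the graph contained in fewer than `ε ℓ n p` triangles,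
where `ℓ = 1 / log(1/p)`. -/
def GoodEdge {n : ℕ} (ε p : ℝ) (ω : Sym2 (Fin n) → Bool) (e : Sym2 (Fin n)) : Prop :=
  IsEdge ω e ∧ (triOnEdge ω e : ℝ) < ε * (1 / Real.log (1 / p)) * n * p

/-- A bad edge: an edge of the graph that is not good. -/
def BadEdge {n : ℕ} (ε p : ℝ) (ω : Sym2 (Fin n) → Bool) (e : Sym2 (Fin n)) : Prop :=
  IsEdge ω e ∧ ¬ ((triOnEdge ω e : ℝ) < ε * (1 / Real.log (1 / p)) * n * p)

/-- A good vertex: one with fewer than `7np` neighbors. -/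
def GoodVertex {n : ℕ} (p : ℝ) (ω : Sym2 (Fin n) → Bool) (u : Fin n) : Prop :=
  (deg ω u : ℝ) < 7 * n * p

/-- `T'`: the number of triangles all of whose edges are good. -/
noncomputable def triGoodEdges {n : ℕ} (ε p : ℝ) (ω : Sym2 (Fin n) → Bool) : ℕ :=
  (Finset.univ.filter (fun t : Finset (Fin n) => IsTriangle ω t ∧
    ∀ u ∈ t, ∀ v ∈ t, u ≠ v → GoodEdge ε p ω s(u, v))).card

/-- `T₀`: the number of triangles with at least one bad edge but all good vertices. -/
noncomputable def triBadEdgeGoodVerts {n : ℕ} (ε p : ℝ) (ω : Sym2 (Fin n) → Bool) : ℕ :=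
  (Finset.univ.filter (fun t : Finset (Fin n) => IsTriangle ω t ∧
    (∃ u ∈ t, ∃ v ∈ t, u ≠ v ∧ BadEdge ε p ω s(u, v)) ∧
    ∀ u ∈ t, GoodVertex p ω u)).card

/-- The number of triangles with exactly `k` bad vertices. -/
noncomputable def triBadVerts {n : ℕ} (p : ℝ) (k : ℕ) (ω : Sym2 (Fin n) → Bool) : ℕ :=
  (Finset.univ.filter (fun t : Finset (Fin n) => IsTriangle ω t ∧
    (t.filter (fun u => ¬ GoodVertex p ω u)).card = k)).card

/-- `t_{uv}` for `e = {u,v}`: the number of common neighbors of `u` and `v` outside `{u,v}`. -/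
noncomputable def commonNbrs {n : ℕ} (ω : Sym2 (Fin n) → Bool) (e : Sym2 (Fin n)) : ℕ :=
  (Finset.univ.filter (fun w => w ∉ e ∧ ∀ u ∈ e, Adj ω u w)).card

/-- A matching: a collection of non-diagonal unordered pairs, no two of which share a vertex. -/
def IsMatching {n : ℕ} (A : Finset (Sym2 (Fin n))) : Prop :=
  (∀ e ∈ A, ¬ e.IsDiag) ∧ ∀ e ∈ A, ∀ f ∈ A, e ≠ f → ∀ v : Fin n, v ∈ e → v ∉ f

/-!
Moment method. Put `K = ⌊ε ℓ n p⌋` and `M = ⌈n²p²L / 24⌉`. A good edge lies in at most `K` good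
triangles, so in an `M`-tuple of good triangles each term meeting an edge of an earlier term takes
one of at most `3 M K` values, while the other terms are pairwise edge-disjoint, and the presence
of edge-disjoint triangles is independent. To make this count inductive, consider pairs `(f, g)`
where `g` is an edge-disjoint family avoiding the edges of `f`, and remove the last term of `f`:
this gives `E[T'^M] ≤ (E T + 3 M K)^M`. Once `n²p²L ≥ 24` we have `3 M K ≤ ε n³p³ / 4`, and
Markov's inequality for `T'^M` bounds the probability by `(1 - δ)^M ≤ exp(-δ n²p²L / 24)` with
`δ = ε / (1 + 6 ε)`. Since `L ≥ log (1 + 3 ε) / 3` unless `(1 + 3 ε) p³ ≥ 1`, this covers every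
large `np` except that case, where the event is empty because `T' ≤ C(n, 3) ≤ n³ / 6`.
-/

open Finset

section Packing

variable {α γ : Type*} (S : Finset α) (E : α → Finset γ)

noncomputable def packings (s : ℕ) : Finset (Fin s → α) :=
  {g ∈ Fintype.piFinset fun _ => S | Pairwise fun l l' => Disjoint (E (g l)) (E (g l'))}

noncomputable def packingPairs (m s : ℕ) : Finset ((Fin m → α) × (Fin s → α)) :=
  {q ∈ Fintype.piFinset (fun _ => S) ×ˢ packings S E s | ∀ i l, Disjoint (E (q.1 i)) (E (q.2 l))}

def LastIsFresh {m : ℕ} (f : Fin (m + 1) → α) : Prop :=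
  ∀ j : Fin m, Disjoint (E (Fin.init f j)) (E (f (Fin.last m)))

variable {S E}

lemma packings_mono {T : Finset α} (h : S ⊆ T) (s : ℕ) : packings S E s ⊆ packings T E s :=
  filter_subset_filter _ (Fintype.piFinset_subset _ _ fun _ => h)

lemma mem_packingPairs {m s : ℕ} {q : (Fin m → α) × (Fin s → α)} :
    q ∈ packingPairs S E m s ↔ (∀ i, q.1 i ∈ S) ∧ (∀ l, q.2 l ∈ S) ∧
      (Pairwise fun l l' => Disjoint (E (q.2 l)) (E (q.2 l'))) ∧
      ∀ i l, Disjoint (E (q.1 i)) (E (q.2 l)) := by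
  simp only [packingPairs, packings, mem_filter, mem_product, Fintype.mem_piFinset, and_assoc]

lemma card_filter_lastIsFresh_le (m s : ℕ) :
    #{q ∈ packingPairs S E (m + 1) s | LastIsFresh E q.1} ≤ #(packingPairs S E m (s + 1)) := by
  refine card_le_card_of_injOn (fun q => (Fin.init q.1, Fin.cons (q.1 (Fin.last m)) q.2)) ?_ ?_
  · intro q hq
    simp only [mem_coe, mem_filter, mem_packingPairs] at hq
    obtain ⟨⟨hf, hg, hgg, hfg⟩, hfresh⟩ := hq
    simp only [mem_coe, mem_packingPairs]
    refine ⟨fun i => hf _, Fin.cases (hf _) hg, ?_, fun i => Fin.cases (hfresh i) (hfg _)⟩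
    intro l l' hll'
    induction l using Fin.cases <;> induction l' using Fin.cases
    · exact absurd rfl hll'
    · exact hfg _ _
    · exact (hfg _ _).symm
    · exact hgg (ne_of_apply_ne Fin.succ hll')
  · intro q _ q' _ h
    simp only [Prod.mk.injEq, Fin.cons_inj] at h
    obtain ⟨hinit, hlast, hg⟩ := h
    exact Prod.ext (by rw [← Fin.snoc_init_self q.1, ← Fin.snoc_init_self q'.1, hinit, hlast]) hg

variable (S E)

lemma card_packingPairs_zero_left (s : ℕ) : #(packingPairs S E 0 s) = #(packings S E s) := by
  rw [packingPairs, filter_true_of_mem fun q _ i => i.elim0, card_product,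
    Fintype.card_piFinset, Fin.prod_univ_zero, one_mul]

lemma card_packingPairs_zero_right (m : ℕ) : #(packingPairs S E m 0) = #S ^ m := by
  have : packings S E 0 = {Fin.elim0} := by
    ext g
    simp only [packings, Fintype.piFinset_of_isEmpty, mem_filter, mem_singleton]
    exact ⟨fun _ => Subsingleton.elim _ _, fun _ => ⟨mem_univ _, fun l => l.elim0⟩⟩
  rw [packingPairs, filter_true_of_mem fun q _ i l => l.elim0, card_product, this,
    card_singleton, mul_one, Fintype.card_piFinset, prod_const, card_univ, Fintype.card_fin]

variable [DecidableEq γ] {S E} {k K : ℕ}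

lemma card_filter_not_disjoint_le (hE : ∀ x ∈ S, #(E x) ≤ k)
    (hK : ∀ e, #{x ∈ S | e ∈ E x} ≤ K) {m : ℕ} {f : Fin m → α} (hf : ∀ j, f j ∈ S) :
    #{x ∈ S | ∃ j, ¬Disjoint (E (f j)) (E x)} ≤ m * k * K := by
  have hsub : {x ∈ S | ∃ j, ¬Disjoint (E (f j)) (E x)} ⊆
      univ.biUnion fun j => (E (f j)).biUnion fun e => {x ∈ S | e ∈ E x} := by
    intro x hx
    obtain ⟨hxS, j, hj⟩ := mem_filter.mp hx
    obtain ⟨e, hej, hex⟩ := not_disjoint_iff.mp hj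
    simp only [mem_biUnion, mem_univ, mem_filter, true_and]
    exact ⟨j, e, hej, hxS, hex⟩
  refine (card_le_card hsub).trans ?_
  have := card_biUnion_le_card_mul univ _ (k * K) fun j _ =>
    (card_biUnion_le_card_mul _ _ _ fun e _ => hK e).trans (Nat.mul_le_mul_right _ (hE _ (hf j)))
  simpa [mul_assoc] using this

lemma card_filter_not_lastIsFresh_le (hE : ∀ x ∈ S, #(E x) ≤ k)
    (hK : ∀ e, #{x ∈ S | e ∈ E x} ≤ K) (m s : ℕ) :
    #{q ∈ packingPairs S E (m + 1) s | ¬LastIsFresh E q.1} ≤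
      m * k * K * #(packingPairs S E m s) := by
  refine card_le_mul_card_image_of_maps_to
    (f := fun q : (Fin (m + 1) → α) × (Fin s → α) => (Fin.init q.1, q.2)) ?_ _ ?_
  · intro q hq
    obtain ⟨hf, hg, hgg, hfg⟩ := mem_packingPairs.mp (mem_filter.mp hq).1
    exact mem_packingPairs.mpr ⟨fun i => hf _, hg, hgg, fun i => hfg _⟩
  · rintro ⟨f, g⟩ hfg
    obtain ⟨hf, -⟩ := mem_packingPairs.mp hfg
    refine le_trans ?_ (card_filter_not_disjoint_le hE hK hf)
    refine card_le_card_of_injOn (fun q => q.1 (Fin.last m)) ?_ ?_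
    · intro q hq
      simp only [mem_coe, mem_filter, mem_packingPairs, Prod.mk.injEq] at hq
      obtain ⟨⟨⟨hq, -⟩, hnot⟩, rfl, -⟩ := hq
      simp only [mem_coe, mem_filter]
      exact ⟨hq _, not_forall.mp hnot⟩
    · intro q hq q' hq' h
      simp only [mem_coe, mem_filter, Prod.mk.injEq] at hq hq'
      refine Prod.ext ?_ (hq.2.2.trans hq'.2.2.symm)
      rw [← Fin.snoc_init_self q.1, ← Fin.snoc_init_self q'.1, hq.2.1, hq'.2.1]
      exact congrArg _ h

lemma card_packingPairs_succ_le (hE : ∀ x ∈ S, #(E x) ≤ k)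
    (hK : ∀ e, #{x ∈ S | e ∈ E x} ≤ K) (m s : ℕ) :
    #(packingPairs S E (m + 1) s) ≤
      #(packingPairs S E m (s + 1)) + m * k * K * #(packingPairs S E m s) := by
  rw [← card_filter_add_card_filter_not fun q => LastIsFresh E q.1]
  exact add_le_add (card_filter_lastIsFresh_le m s) (card_filter_not_lastIsFresh_le hE hK m s)

end Packing

section MomentMethod

variable {Ω α γ : Type*} [MeasurableSpace Ω] [DiscreteMeasurableSpace Ω] [DecidableEq γ]
  {μ : Measure Ω} {S : Ω → Finset α} {E : α → Finset γ} {k K M : ℕ} {D : ℝ≥0∞}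

theorem lintegral_card_packingPairs_le (hE : ∀ ω, ∀ x ∈ S ω, #(E x) ≤ k)
    (hK : ∀ ω e, #{x ∈ S ω | e ∈ E x} ≤ K)
    (hD : ∀ s, ∫⁻ ω, (#(packings (S ω) E s) : ℝ≥0∞) ∂μ ≤ D ^ s) {m : ℕ} (hm : m ≤ M) (s : ℕ) :
    ∫⁻ ω, (#(packingPairs (S ω) E m s) : ℝ≥0∞) ∂μ ≤ D ^ s * (D + (M * k * K : ℕ)) ^ m := by
  induction m generalizing s with
  | zero => simpa [card_packingPairs_zero_left] using hD s
  | succ m ih =>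
    have hstep (ω : Ω) : (#(packingPairs (S ω) E (m + 1) s) : ℝ≥0∞) ≤
        #(packingPairs (S ω) E m (s + 1)) + (M * k * K : ℕ) * #(packingPairs (S ω) E m s) := by
      have hmM : m * k * K ≤ M * k * K := by gcongr; omega
      exact_mod_cast (card_packingPairs_succ_le (hE ω) (hK ω) m s).trans (by gcongr)
    calc ∫⁻ ω, (#(packingPairs (S ω) E (m + 1) s) : ℝ≥0∞) ∂μ
        ≤ ∫⁻ ω, (#(packingPairs (S ω) E m (s + 1)) : ℝ≥0∞) ∂μ
          + (M * k * K : ℕ) * ∫⁻ ω, (#(packingPairs (S ω) E m s) : ℝ≥0∞) ∂μ := by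
          rw [← lintegral_const_mul _ .of_discrete, ← lintegral_add_left .of_discrete]
          exact lintegral_mono hstep
      _ ≤ D ^ (s + 1) * (D + (M * k * K : ℕ)) ^ m
          + (M * k * K : ℕ) * (D ^ s * (D + (M * k * K : ℕ)) ^ m) := by
          gcongr <;> exact ih (by omega) _
      _ = D ^ s * (D + (M * k * K : ℕ)) ^ (m + 1) := by ring

theorem lintegral_card_pow_le_of_packings (hE : ∀ ω, ∀ x ∈ S ω, #(E x) ≤ k)
    (hK : ∀ ω e, #{x ∈ S ω | e ∈ E x} ≤ K)
    (hD : ∀ s, ∫⁻ ω, (#(packings (S ω) E s) : ℝ≥0∞) ∂μ ≤ D ^ s) (M : ℕ) :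
    ∫⁻ ω, (#(S ω) : ℝ≥0∞) ^ M ∂μ ≤ (D + (M * k * K : ℕ)) ^ M := by
  simpa [card_packingPairs_zero_right] using lintegral_card_packingPairs_le hE hK hD le_rfl 0

theorem meas_ge_le_ofReal_div_pow {X : Ω → ℕ} {a b : ℝ} (ha : 0 < a) (hb : 0 ≤ b) (M : ℕ)
    (h : ∫⁻ ω, (X ω : ℝ≥0∞) ^ M ∂μ ≤ ENNReal.ofReal b ^ M) :
    μ {ω | a ≤ X ω} ≤ ENNReal.ofReal ((b / a) ^ M) := by
  have hsub : {ω | a ≤ X ω} ⊆ {ω | ENNReal.ofReal a ^ M ≤ (X ω : ℝ≥0∞) ^ M} := fun ω hω => by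
    change ENNReal.ofReal a ^ M ≤ (X ω : ℝ≥0∞) ^ M
    rw [← ENNReal.ofReal_natCast]
    exact pow_le_pow_left₀ zero_le (ENNReal.ofReal_le_ofReal hω) M
  calc μ {ω | a ≤ X ω} ≤ (∫⁻ ω, (X ω : ℝ≥0∞) ^ M ∂μ) / ENNReal.ofReal a ^ M :=
        (measure_mono hsub).trans <| meas_ge_le_lintegral_div Measurable.of_discrete.aemeasurable
          (by simp [ha]) (by simp)
    _ ≤ ENNReal.ofReal b ^ M / ENNReal.ofReal a ^ M := by gcongr
    _ = ENNReal.ofReal ((b / a) ^ M) := by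
        rw [← ENNReal.ofReal_pow hb, ← ENNReal.ofReal_pow ha.le,
          ← ENNReal.ofReal_div_of_pos (by positivity), div_pow]

end MomentMethod

section Estimates

lemma add_div_add_le_one_sub {ε A D B : ℝ} (hε : 0 < ε) (hA : 0 < A) (hD : 0 ≤ D)
    (hDA : D ≤ A / 6) (hB : B ≤ ε * A / 4) : (D + B) / (D + ε * A) ≤ 1 - ε / (1 + 6 * ε) := by
  have hδ : ε / (1 + 6 * ε) * (D + ε * A) ≤ ε * A / 6 :=
    calc ε / (1 + 6 * ε) * (D + ε * A) ≤ ε / (1 + 6 * ε) * (A / 6 + ε * A) := by gcongr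
      _ = ε * A / 6 := by field_simp
  rw [div_le_iff₀ (by positivity)]
  nlinarith

lemma natCeil_mul_natFloor_le {ε a b L : ℝ} (hε : 0 ≤ ε) (hab : 0 ≤ a * b) (hL : 0 < L)
    (hQ : 24 ≤ (a * b) ^ 2 * L) :
    (⌈(a * b) ^ 2 * L / 24⌉₊ * 3 * ⌊ε * (1 / L) * a * b⌋₊ : ℝ) ≤ ε * (a * b) ^ 3 / 4 := by
  have hceil : (⌈(a * b) ^ 2 * L / 24⌉₊ : ℝ) ≤ (a * b) ^ 2 * L / 12 := by
    linarith [Nat.ceil_lt_add_one (by positivity : 0 ≤ (a * b) ^ 2 * L / 24)]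
  have hfloor : (⌊ε * (1 / L) * a * b⌋₊ : ℝ) ≤ ε * (1 / L) * (a * b) := by
    rw [← mul_assoc]
    exact Nat.floor_le (by rw [mul_assoc]; positivity)
  calc (⌈(a * b) ^ 2 * L / 24⌉₊ * 3 * ⌊ε * (1 / L) * a * b⌋₊ : ℝ)
      ≤ (a * b) ^ 2 * L / 12 * 3 * (ε * (1 / L) * (a * b)) := by gcongr
    _ = ε * (a * b) ^ 3 / 4 := by field_simp; ring

lemma pow_le_exp_neg_mul {r δ x : ℝ} (hr : 0 ≤ r) (hrδ : r ≤ 1 - δ) (hδ : 0 ≤ δ) {M : ℕ}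
    (hx : x ≤ M) : r ^ M ≤ Real.exp (-(δ * x)) :=
  calc r ^ M ≤ Real.exp (-δ) ^ M := by gcongr; linarith [Real.one_sub_le_exp_neg δ]
    _ = Real.exp (-(δ * M)) := by rw [← Real.exp_nat_mul]; ring_nf
    _ ≤ Real.exp (-(δ * x)) := by gcongr

lemma choose_three_le (n : ℕ) : (n.choose 3 : ℝ) ≤ n ^ 3 / 6 := by
  simpa [Nat.factorial] using Nat.choose_le_pow_div (α := ℝ) 3 n

lemma log_div_three_le_log_one_div {c p : ℝ} (hc : 0 < c) (hp : 0 < p) (h : c * p ^ 3 < 1) :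
    Real.log c / 3 ≤ Real.log (1 / p) := by
  have hlt : c < (1 / p) ^ 3 := by rwa [one_div_pow, lt_div_iff₀ (by positivity)]
  have := Real.log_lt_log hc hlt
  rw [Real.log_pow] at this
  push_cast at this
  linarith

end Estimates

section EdgesOf

variable {α : Type*} [DecidableEq α]

def edgesOf (t : Finset α) : Finset (Sym2 α) := t.offDiag.image Sym2.mk.uncurry

lemma mk_mem_edgesOf {t : Finset α} {a b : α} : s(a, b) ∈ edgesOf t ↔ a ∈ t ∧ b ∈ t ∧ a ≠ b := by
  simp only [edgesOf, mem_image, mem_offDiag, Prod.exists, Function.uncurry_apply_pair, Sym2.eq_iff]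
  constructor
  · rintro ⟨x, y, ⟨hx, hy, hxy⟩, ⟨rfl, rfl⟩ | ⟨rfl, rfl⟩⟩
    exacts [⟨hx, hy, hxy⟩, ⟨hy, hx, hxy.symm⟩]
  · rintro ⟨ha, hb, hab⟩
    exact ⟨a, b, ⟨ha, hb, hab⟩, .inl ⟨rfl, rfl⟩⟩

lemma card_edgesOf (t : Finset α) : #(edgesOf t) = (#t).choose 2 := Sym2.card_image_offDiag t

end EdgesOf

section RandomGraph

variable {n : ℕ}

lemma isTriangle_iff {ω : Sym2 (Fin n) → Bool} {t : Finset (Fin n)} :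
    IsTriangle ω t ↔ #t = 3 ∧ ∀ e ∈ edgesOf t, ω e = true := by
  refine and_congr_right fun _ => ⟨fun h e he => ?_, fun h u hu v hv huv => ⟨huv, ?_⟩⟩
  · induction e using Sym2.ind with
    | _ u v =>
      obtain ⟨hu, hv, huv⟩ := mk_mem_edgesOf.mp he
      exact (h u hu v hv huv).2
  · exact h _ (mk_mem_edgesOf.mpr ⟨hu, hv, huv⟩)

noncomputable def triangles (ω : Sym2 (Fin n) → Bool) : Finset (Finset (Fin n)) :=
  {t | IsTriangle ω t}

noncomputable def goodTriangles (ε p : ℝ) (ω : Sym2 (Fin n) → Bool) : Finset (Finset (Fin n)) :=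
  {t | IsTriangle ω t ∧ ∀ u ∈ t, ∀ v ∈ t, u ≠ v → GoodEdge ε p ω s(u, v)}

lemma goodTriangles_subset_triangles (ε p : ℝ) (ω : Sym2 (Fin n) → Bool) :
    goodTriangles ε p ω ⊆ triangles ω :=
  monotone_filter_right _ fun _ _ => And.left

lemma card_goodTriangles_edge_le (ε p : ℝ) (ω : Sym2 (Fin n) → Bool) (e : Sym2 (Fin n)) :
    #{t ∈ goodTriangles ε p ω | e ∈ edgesOf t} ≤ ⌊ε * (1 / Real.log (1 / p)) * n * p⌋₊ := by
  rcases eq_empty_or_nonempty {t ∈ goodTriangles ε p ω | e ∈ edgesOf t} with h | ⟨t₀, ht₀⟩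
  · simp [h]
  induction e using Sym2.ind with
  | _ u v =>
    simp only [goodTriangles, mem_filter, mem_univ, true_and, mk_mem_edgesOf] at ht₀
    obtain ⟨⟨-, hgood⟩, hu, hv, huv⟩ := ht₀
    refine Nat.le_floor <| (Nat.cast_le.mpr (card_le_card fun t ht => ?_)).trans
      (hgood u hu v hv huv).2.le
    simp only [goodTriangles, mem_filter, mem_univ, true_and, mk_mem_edgesOf] at ht ⊢
    exact ⟨ht.1.1, fun w hw => by rcases Sym2.mem_iff.mp hw with rfl | rfl <;> tauto⟩

lemma card_goodTriangles_le_choose (ε p : ℝ) (ω : Sym2 (Fin n) → Bool) :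
    #(goodTriangles ε p ω) ≤ n.choose 3 := by
  calc #(goodTriangles ε p ω) ≤ #(powersetCard 3 (univ : Finset (Fin n))) :=
        card_le_card fun t ht => mem_powersetCard_univ.mpr (mem_filter.mp ht).2.1.1
    _ = n.choose 3 := by simp

lemma triGoodEdges_lt_of_one_le {ε : ℝ} (hε : 0 < ε) {p : ℝ} (hnp : 0 < n * p)
    (hp : 1 ≤ (1 + 3 * ε) * p ^ 3) (ω : Sym2 (Fin n) → Bool) :
    (triGoodEdges ε p ω : ℝ) < n.choose 3 * p ^ 3 + ε * n ^ 3 * p ^ 3 := by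
  have hT : (triGoodEdges ε p ω : ℝ) ≤ n.choose 3 := by
    exact_mod_cast card_goodTriangles_le_choose ε p ω
  have hp0 : 0 < p := pos_of_mul_pos_right hnp n.cast_nonneg
  have hexcess : (n.choose 3 : ℝ) * (1 - p ^ 3) ≤ n ^ 3 / 6 * (3 * ε * p ^ 3) := by
    rcases le_total 0 (1 - p ^ 3) with h | h
    · exact mul_le_mul (choose_three_le n) (by linarith) h (by positivity)
    · exact (mul_nonpos_of_nonneg_of_nonpos (by positivity) h).trans (by positivity)
  have hA : 0 < (n : ℝ) ^ 3 * p ^ 3 := by rw [← mul_pow]; positivity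
  nlinarith

variable (p : ℝ≥0) (hp : p ≤ 1)

instance : IsProbabilityMeasure (erMeasure n p hp) := by
  unfold erMeasure; infer_instance

lemma erMeasure_forall_eq_true (s : Finset (Sym2 (Fin n))) :
    erMeasure n p hp {ω | ∀ e ∈ s, ω e = true} = (p : ℝ≥0∞) ^ #s := by
  have : {ω : Sym2 (Fin n) → Bool | ∀ e ∈ s, ω e = true} =
      (s : Set (Sym2 (Fin n))).pi fun _ => {true} := by
    ext ω; simp
  rw [this, erMeasure, Measure.pi_pi_finset, prod_const,
    PMF.toMeasure_apply_singleton _ _ (measurableSet_singleton _)]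
  rfl

lemma erMeasure_isTriangle {t : Finset (Fin n)} (ht : #t = 3) :
    erMeasure n p hp {ω | IsTriangle ω t} = (p : ℝ≥0∞) ^ 3 := by
  simp only [isTriangle_iff, ht, true_and]
  rw [erMeasure_forall_eq_true, card_edgesOf, ht]
  rfl

theorem integral_triangleCount :
    ∫ ω, (triangleCount ω : ℝ) ∂(erMeasure n p hp) = n.choose 3 * (p : ℝ) ^ 3 := by
  have hcount (ω : Sym2 (Fin n) → Bool) : (triangleCount ω : ℝ) =
      ∑ t ∈ powersetCard 3 (univ : Finset (Fin n)), {ω | IsTriangle ω t}.indicator 1 ω := by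
    have : ({t | IsTriangle ω t} : Finset (Finset (Fin n))) =
        {t ∈ powersetCard 3 (univ : Finset (Fin n)) | IsTriangle ω t} := by
      ext t
      simp only [mem_filter, mem_univ, true_and, mem_powersetCard_univ]
      exact ⟨fun h => ⟨h.1, h⟩, And.right⟩
    rw [triangleCount, this, card_filter]
    simp [Set.indicator_apply]
  simp_rw [hcount]
  rw [integral_finsetSum _ fun t _ => (integrable_const 1).indicator (Set.toFinite _).measurableSet]
  rw [sum_congr rfl fun t ht => by
    rw [integral_indicator_one (Set.toFinite _).measurableSet, measureReal_def,
      erMeasure_isTriangle p hp (mem_powersetCard_univ.mp ht)]]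
  simp [card_powersetCard]

lemma erMeasure_forall_isTriangle {s : ℕ} {g : Fin s → Finset (Fin n)}
    (hg : g ∈ packings (powersetCard 3 univ) edgesOf s) :
    erMeasure n p hp {ω | ∀ i, IsTriangle ω (g i)} = ((p : ℝ≥0∞) ^ 3) ^ s := by
  simp only [packings, mem_filter, Fintype.mem_piFinset, mem_powersetCard_univ] at hg
  obtain ⟨hcard, hdisj⟩ := hg
  have : {ω | ∀ i, IsTriangle ω (g i)} =
      {ω | ∀ e ∈ univ.biUnion fun i => edgesOf (g i), ω e = true} := by
    ext ω
    simp only [Set.mem_ofPred_eq, isTriangle_iff, hcard, true_and, mem_biUnion, mem_univ]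
    exact ⟨fun h e ⟨i, he⟩ => h i e he, fun h i e he => h e ⟨i, he⟩⟩
  rw [this, erMeasure_forall_eq_true, card_biUnion fun i _ j _ hij => hdisj hij]
  simp [card_edgesOf, hcard, ← pow_mul, mul_comm]

theorem lintegral_card_packings_triangles_le (s : ℕ) :
    ∫⁻ ω, (#(packings (triangles ω) edgesOf s) : ℝ≥0∞) ∂(erMeasure n p hp) ≤
      (n.choose 3 * (p : ℝ≥0∞) ^ 3) ^ s := by
  set P := packings (powersetCard 3 (univ : Finset (Fin n))) edgesOf s
  have hcount (ω : Sym2 (Fin n) → Bool) : (#(packings (triangles ω) edgesOf s) : ℝ≥0∞) =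
      ∑ g ∈ P, {ω | ∀ i, IsTriangle ω (g i)}.indicator 1 ω := by
    have : packings (triangles ω) edgesOf s = {g ∈ P | ∀ i, IsTriangle ω (g i)} := by
      ext g
      simp only [P, packings, triangles, mem_filter, Fintype.mem_piFinset, mem_univ, true_and,
        mem_powersetCard_univ]
      exact ⟨fun h => ⟨⟨fun i => (h.1 i).1, h.2⟩, h.1⟩, fun h => ⟨h.2, h.1.2⟩⟩
    rw [this, card_filter]
    simp [Set.indicator_apply]
  have hP : #P ≤ n.choose 3 ^ s := by
    refine (card_le_card (filter_subset _ _)).trans ?_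
    simp [card_powersetCard]
  simp_rw [hcount]
  rw [lintegral_finsetSum _ fun g _ => measurable_one.indicator (Set.toFinite _).measurableSet]
  simp_rw [lintegral_indicator_one (Set.toFinite _).measurableSet]
  rw [sum_congr rfl fun g hg => erMeasure_forall_isTriangle p hp hg, sum_const, nsmul_eq_mul,
    mul_pow]
  gcongr
  exact_mod_cast hP

theorem lintegral_triGoodEdges_pow_le (ε : ℝ) (M : ℕ) :
    ∫⁻ ω, (triGoodEdges ε p ω : ℝ≥0∞) ^ M ∂(erMeasure n p hp) ≤
      (n.choose 3 * (p : ℝ≥0∞) ^ 3 + (M * 3 * ⌊ε * (1 / Real.log (1 / p)) * n * p⌋₊ : ℕ)) ^ M := by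
  refine lintegral_card_pow_le_of_packings (S := goodTriangles ε p) (fun ω t ht => ?_)
    (card_goodTriangles_edge_le ε p) (fun s => ?_) M
  · simp only [goodTriangles, mem_filter] at ht
    simp [card_edgesOf, ht.2.1.1]
  · refine (lintegral_mono fun ω => ?_).trans (lintegral_card_packings_triangles_le p hp s)
    exact Nat.cast_le.mpr (card_le_card (packings_mono (goodTriangles_subset_triangles ε p ω) s))

theorem erMeasure_triGoodEdges_ge_le {ε : ℝ} (hε : 0 < ε) (hp0 : 0 < (p : ℝ)) (hp1 : (p : ℝ) < 1)
    (hQ : 24 ≤ ((n : ℝ) * p) ^ 2 * Real.log (1 / p)) :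
    erMeasure n p hp {ω | n.choose 3 * (p : ℝ) ^ 3 + ε * n ^ 3 * p ^ 3 ≤ triGoodEdges ε p ω} ≤
      ENNReal.ofReal
        (Real.exp (-(ε / (1 + 6 * ε) * (((n : ℝ) * p) ^ 2 * Real.log (1 / p) / 24)))) := by
  set L := Real.log (1 / (p : ℝ))
  have hL : 0 < L := Real.log_pos (one_lt_one_div hp0 hp1)
  set M := ⌈((n : ℝ) * p) ^ 2 * L / 24⌉₊
  set D := (n.choose 3 : ℝ) * p ^ 3
  set B := M * 3 * ⌊ε * (1 / L) * n * p⌋₊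
  have hnp : 0 < (n : ℝ) * p := by
    by_contra! h
    rw [le_antisymm h (by positivity)] at hQ
    norm_num at hQ
  have hD : D ≤ ((n : ℝ) * p) ^ 3 / 6 := by
    have := mul_le_mul_of_nonneg_right (choose_three_le n) (by positivity : (0 : ℝ) ≤ p ^ 3)
    rw [mul_pow]
    linarith
  have hB : (B : ℝ) ≤ ε * ((n : ℝ) * p) ^ 3 / 4 := by
    simpa [B] using natCeil_mul_natFloor_le hε.le hnp.le hL hQ
  have hmom : ∫⁻ ω, (triGoodEdges ε p ω : ℝ≥0∞) ^ M ∂(erMeasure n p hp) ≤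
      ENNReal.ofReal (D + B) ^ M := by
    convert lintegral_triGoodEdges_pow_le p hp ε M using 3
    rw [ENNReal.ofReal_add (by positivity) (by positivity), ENNReal.ofReal_mul (by positivity),
      ENNReal.ofReal_pow hp0.le, ENNReal.ofReal_natCast, ENNReal.ofReal_natCast,
      ENNReal.ofReal_coe_nnreal]
  have hA : 0 < ((n : ℝ) * p) ^ 3 := pow_pos hnp 3
  have hratio := add_div_add_le_one_sub hε hA (by positivity) hD hB
  calc _ ≤ ENNReal.ofReal (((D + B) / (D + ε * ((n : ℝ) * p) ^ 3)) ^ M) := by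
        rw [show ε * (n : ℝ) ^ 3 * p ^ 3 = ε * ((n : ℝ) * p) ^ 3 by ring]
        exact meas_ge_le_ofReal_div_pow (add_pos_of_nonneg_of_pos (by positivity) (mul_pos hε hA))
          (by positivity) M hmom
    _ ≤ _ := ENNReal.ofReal_le_ofReal <|
        pow_le_exp_neg_mul (by positivity) hratio (by positivity) (Nat.le_ceil _)

end RandomGraph

/-- **Proposition 4.1**: upper tail for the number of triangles with all good edges. -/
theorem triGoodEdges_upper_tail (ε : ℝ) (hε : 0 < ε) :
    ∃ C : ℝ, 0 < C ∧ ∃ M : ℝ, ∀ (n : ℕ) (p : ℝ≥0) (hp : p ≤ 1),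
      0 < (p : ℝ) → (p : ℝ) < 1 → M ≤ (n : ℝ) * (p : ℝ) →
      erMeasure n p hp
          {ω | (∫ ω', (triangleCount ω' : ℝ) ∂(erMeasure n p hp))
                + ε * (n : ℝ) ^ 3 * (p : ℝ) ^ 3 ≤ (triGoodEdges ε (p : ℝ) ω : ℝ)}
        ≤ ENNReal.ofReal
            (Real.exp (-C * (n : ℝ) ^ 2 * (p : ℝ) ^ 2 * Real.log (1 / (p : ℝ)))) := by
  set L₀ := Real.log (1 + 3 * ε) / 3
  have hL₀ : 0 < L₀ := div_pos (Real.log_pos (by linarith)) three_pos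
  refine ⟨ε / (1 + 6 * ε) / 24, by positivity, √(24 / L₀), fun n p hp hp0 hp1 hM => ?_⟩
  have hnp : 0 < (n : ℝ) * p := (Real.sqrt_pos.mpr (by positivity)).trans_le hM
  rw [integral_triangleCount]
  by_cases hbig : 1 ≤ (1 + 3 * ε) * (p : ℝ) ^ 3
  · simp [fun ω => (triGoodEdges_lt_of_one_le hε hnp hbig ω).not_ge]
  have hL : L₀ ≤ Real.log (1 / p) := log_div_three_le_log_one_div (by linarith) hp0 (not_le.mp hbig)
  have hQ : 24 ≤ ((n : ℝ) * p) ^ 2 * Real.log (1 / p) := by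
    have := (Real.sqrt_le_left hnp.le).mp hM
    rw [div_le_iff₀ hL₀] at this
    nlinarith
  convert erMeasure_triGoodEdges_ge_le p hp hε hp0 hp1 hQ using 3
  ring
end

section
/- Let $E_3$ be the event that the Erdős–Rényi random graph $G(n,p)$ has more than $Lnp$ bad vertices, where $L := \log(1/p)$. There is an absolute constant $C > 0$ such that if $p > C^{-1} n^{-1}\log n$ (and $p < 1$), then $\mathbb{P}(E_3) \le e^{-C n^2 p^2 \log(1/p)}$. -/
open MeasureTheory ProbabilityTheory Real
open scoped Classical ENNReal NNReal

/-!
Choose `k = ⌈L n p⌉` bad vertices `B`. Each has degree at least `7np`, so at least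
`m = ⌈7 k n p / 2⌉` edges meet `B`, and these lie among the at most `k n` pairs meeting `B`.
A union bound over `B` and over `m`-sets of such pairs bounds the probability by
`C(n,k) C(kn,m) p^m ≤ n^k (2e/7)^m ≤ exp (k n p / 100 - m / 5)`, using `log n ≤ n p / 100`,
and since `k ≥ L n p` this is at most `exp (-n² p² L / 100)`.
-/

open Finset

section ProductBernoulli

variable {ι : Type*} [Fintype ι] (μ : ι → Measure Bool) [∀ i, IsProbabilityMeasure (μ i)]

theorem pi_forall_eq_true (S : Finset ι) :
    Measure.pi μ {ω | ∀ i ∈ S, ω i = true} = ∏ i ∈ S, μ i {true} := by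
  rw [← Measure.pi_pi_finset]
  rfl

theorem pi_le_card_filter_eq_true_le {r : ℝ≥0∞} (hr : ∀ i, μ i {true} ≤ r)
    (T : Finset ι) (m : ℕ) :
    Measure.pi μ {ω | m ≤ #{i ∈ T | ω i = true}} ≤ (#T).choose m * r ^ m := by
  have hcover : {ω : ι → Bool | m ≤ #{i ∈ T | ω i = true}} ⊆
      ⋃ S ∈ T.powersetCard m, {ω | ∀ i ∈ S, ω i = true} := by
    intro ω hω
    obtain ⟨S, hST, hS⟩ := exists_subset_card_eq hω
    refine Set.mem_biUnion (mem_powersetCard.2 ⟨hST.trans (filter_subset _ _), hS⟩) ?_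
    exact fun i hi => (mem_filter.1 (hST hi)).2
  calc Measure.pi μ {ω | m ≤ #{i ∈ T | ω i = true}}
      ≤ ∑ S ∈ T.powersetCard m, Measure.pi μ {ω | ∀ i ∈ S, ω i = true} :=
        (measure_mono hcover).trans (measure_biUnion_finset_le _ _)
    _ ≤ ∑ S ∈ T.powersetCard m, r ^ m := by
        refine sum_le_sum fun S hS => ?_
        rw [pi_forall_eq_true, ← (mem_powersetCard.1 hS).2]
        exact prod_le_pow_card _ _ _ fun i _ => hr i
    _ = (#T).choose m * r ^ m := by rw [sum_const, card_powersetCard, nsmul_eq_mul]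

end ProductBernoulli

set_option linter.deprecated false in
theorem bernoulli_toMeasure_true (p : ℝ≥0) (hp : p ≤ 1) :
    (PMF.bernoulli p hp).toMeasure {true} = p := by
  rw [PMF.toMeasure_apply_singleton _ _ (measurableSet_singleton _), PMF.bernoulli_apply]
  rfl

section PairsMeeting

variable {α : Type*} [DecidableEq α]

theorem sum_card_filter_mem_le_two_mul (B : Finset α) (E : Finset (Sym2 α)) :
    ∑ v ∈ B, #{e ∈ E | v ∈ e} ≤ 2 * #E := by
  calc ∑ v ∈ B, #{e ∈ E | v ∈ e} = ∑ e ∈ E, #{v ∈ B | v ∈ e} := by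
        simp_rw [card_filter]
        exact sum_comm
    _ ≤ ∑ _e ∈ E, 2 := sum_le_sum fun e _ => ?_
    _ = 2 * #E := by rw [sum_const, smul_eq_mul, mul_comm]
  induction e using Sym2.inductionOn with
  | hf a b =>
    calc #{v ∈ B | v ∈ s(a, b)} ≤ #({a, b} : Finset α) :=
          card_le_card fun v hv => by
            simp only [mem_filter, Sym2.mem_iff] at hv
            simp [hv.2]
      _ ≤ 2 := card_le_two

variable [Fintype α]

def pairsMeeting (B : Finset α) : Finset (Sym2 α) :=
  (B ×ˢ univ).image fun x => s(x.1, x.2)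

theorem card_pairsMeeting_le (B : Finset α) : #(pairsMeeting B) ≤ #B * Fintype.card α :=
  card_image_le.trans (by rw [card_product, card_univ])

end PairsMeeting

section Degrees

variable {n : ℕ}

theorem sum_deg_le_two_mul_card_pairsMeeting (ω : Sym2 (Fin n) → Bool) (B : Finset (Fin n)) :
    ∑ v ∈ B, deg ω v ≤ 2 * #{e ∈ pairsMeeting B | ω e = true} := by
  refine le_trans (sum_le_sum fun v hv => ?_) (sum_card_filter_mem_le_two_mul B _)
  refine card_le_card_of_injOn (fun u => s(v, u)) (fun u hu => ?_)
    fun u₁ _ u₂ _ h => Sym2.congr_right.1 h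
  simp only [coe_filter, Set.mem_ofPred_eq, mem_univ, true_and] at hu
  rw [mem_coe, mem_filter, mem_filter]
  exact ⟨⟨mem_image.2 ⟨(v, u), mem_product.2 ⟨hv, mem_univ _⟩, rfl⟩, hu.2⟩,
    Sym2.mem_mk_left v u⟩

theorem exists_card_pairsMeeting_ge (ω : Sym2 (Fin n) → Bool) {d : ℝ} {k : ℕ}
    (hk : k ≤ #{u | d ≤ deg ω u}) :
    ∃ B : Finset (Fin n), #B = k ∧ ⌈d * k / 2⌉₊ ≤ #{e ∈ pairsMeeting B | ω e = true} := by
  obtain ⟨B, hB, rfl⟩ := exists_subset_card_eq hk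
  refine ⟨B, rfl, Nat.ceil_le.2 ?_⟩
  have hdeg : ∑ _v ∈ B, d ≤ ∑ v ∈ B, (deg ω v : ℝ) :=
    sum_le_sum fun v hv => (mem_filter.1 (hB hv)).2
  have hsum : (∑ v ∈ B, deg ω v : ℝ) ≤ 2 * #{e ∈ pairsMeeting B | ω e = true} := by
    exact_mod_cast sum_deg_le_two_mul_card_pairsMeeting ω B
  rw [sum_const, nsmul_eq_mul] at hdeg
  linarith

end Degrees

theorem erMeasure_exists_card_pairsMeeting_ge_le (n : ℕ) (p : ℝ≥0) (hp : p ≤ 1) (k m : ℕ) :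
    erMeasure n p hp
        {ω | ∃ B : Finset (Fin n), #B = k ∧ m ≤ #{e ∈ pairsMeeting B | ω e = true}}
      ≤ ENNReal.ofReal (n.choose k * (k * n).choose m * (p : ℝ) ^ m) := by
  have hcover : {ω : Sym2 (Fin n) → Bool |
        ∃ B : Finset (Fin n), #B = k ∧ m ≤ #{e ∈ pairsMeeting B | ω e = true}} =
      ⋃ B ∈ (univ : Finset (Fin n)).powersetCard k,
        {ω | m ≤ #{e ∈ pairsMeeting B | ω e = true}} := by
    ext ω
    simp
  have hB : ∀ B ∈ (univ : Finset (Fin n)).powersetCard k,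
      erMeasure n p hp {ω | m ≤ #{e ∈ pairsMeeting B | ω e = true}} ≤
        (k * n).choose m * (p : ℝ≥0∞) ^ m := by
    intro B hB
    refine (pi_le_card_filter_eq_true_le _
      (fun _ => (bernoulli_toMeasure_true p hp).le) _ m).trans ?_
    gcongr
    simpa [(mem_powersetCard_univ.1 hB)] using card_pairsMeeting_le B
  calc _ ≤ ∑ B ∈ (univ : Finset (Fin n)).powersetCard k,
          erMeasure n p hp {ω | m ≤ #{e ∈ pairsMeeting B | ω e = true}} := by
        rw [hcover]
        exact measure_biUnion_finset_le _ _
    _ ≤ ∑ _B ∈ (univ : Finset (Fin n)).powersetCard k,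
          ((k * n).choose m * (p : ℝ≥0∞) ^ m) := sum_le_sum hB
    _ = _ := by
        rw [sum_const, card_powersetCard, card_univ, Fintype.card_fin, nsmul_eq_mul,
          ENNReal.ofReal_mul (by positivity), ENNReal.ofReal_pow p.coe_nonneg,
          ENNReal.ofReal_coe_nnreal, ENNReal.ofReal_mul (by positivity), ENNReal.ofReal_natCast,
          ENNReal.ofReal_natCast]
        ring

theorem choose_mul_pow_le {N m : ℕ} {x c : ℝ} (hx : 0 ≤ x) (hc : 0 ≤ c)
    (hNx : N * x ≤ c * m) :
    (N.choose m : ℝ) * x ^ m ≤ (c * exp 1) ^ m := by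
  calc (N.choose m : ℝ) * x ^ m ≤ (N : ℝ) ^ m / m.factorial * x ^ m := by
        gcongr
        exact Nat.choose_le_pow_div m N
    _ = (N * x) ^ m / m.factorial := by ring
    _ ≤ (c * m) ^ m / m.factorial := by gcongr
    _ = c ^ m * ((m : ℝ) ^ m / m.factorial) := by ring
    _ ≤ c ^ m * exp 1 ^ m := by
        gcongr
        rw [exp_one_pow]
        exact pow_div_factorial_le_exp _ m.cast_nonneg m
    _ = (c * exp 1) ^ m := (mul_pow _ _ _).symm

theorem choose_mul_choose_mul_pow_le_exp {n k m : ℕ} {q L : ℝ} (hq : 0 ≤ q)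
    (hlog : log n ≤ n * q / 100) (hk : L * n * q ≤ k) (hm : 7 * n * q * k / 2 ≤ m) :
    (n.choose k : ℝ) * (k * n).choose m * q ^ m ≤ exp (-(1 / 100) * n ^ 2 * q ^ 2 * L) := by
  have hn : (n : ℝ) ≤ exp (n * q / 100) := (le_exp_log _).trans (exp_le_exp.2 hlog)
  have h45 : 2 / 7 * exp 1 ≤ exp (-(1 / 5)) := by
    have := add_one_le_exp (-(1 / 5) : ℝ)
    nlinarith [exp_one_lt_d9]
  have hchoose : ((k * n).choose m : ℝ) * q ^ m ≤ exp (-(1 / 5)) ^ m := by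
    refine (choose_mul_pow_le (c := 2 / 7) hq (by norm_num) ?_).trans (by gcongr)
    push_cast
    linarith
  have hknq : L * n ^ 2 * q ^ 2 ≤ k * n * q := by
    have := mul_le_mul_of_nonneg_right hk (by positivity : (0 : ℝ) ≤ n * q)
    linarith
  calc (n.choose k : ℝ) * (k * n).choose m * q ^ m
      ≤ exp (n * q / 100) ^ k * exp (-(1 / 5)) ^ m := by
        rw [mul_assoc]
        gcongr
        exact (Nat.cast_le.2 (Nat.choose_le_pow n k)).trans (by push_cast; gcongr)
    _ = exp (k * n * q / 100 - m / 5) := by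
        rw [← exp_nat_mul, ← exp_nat_mul, ← exp_add]
        ring_nf
    _ ≤ exp (-(1 / 100) * n ^ 2 * q ^ 2 * L) := by
        gcongr
        nlinarith [mul_nonneg (mul_nonneg (k.cast_nonneg : (0 : ℝ) ≤ k) n.cast_nonneg) hq]

/-- **Lemma 6.3**: with high probability there are at most `L n p` bad vertices,
where `L = log(1/p)`. -/
theorem E3_tail :
    ∃ C : ℝ, 0 < C ∧ ∀ (n : ℕ) (p : ℝ≥0) (hp : p ≤ 1),
      C⁻¹ * Real.log n / n < (p : ℝ) → (p : ℝ) < 1 →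
      erMeasure n p hp
          {ω | Real.log (1 / (p : ℝ)) * n * (p : ℝ) <
                ((Finset.univ.filter (fun u => ¬ GoodVertex (p : ℝ) ω u)).card : ℝ)}
        ≤ ENNReal.ofReal
            (Real.exp (-C * (n : ℝ) ^ 2 * (p : ℝ) ^ 2 * Real.log (1 / (p : ℝ)))) := by
  refine ⟨1 / 100, by norm_num, fun n p hp hlow _ => ?_⟩
  have hlog : Real.log n ≤ n * p / 100 := by
    rcases n.eq_zero_or_pos with rfl | hn
    · simp
    · rw [one_div, inv_inv, div_lt_iff₀ (by exact_mod_cast hn)] at hlow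
      linarith
  set k := ⌈Real.log (1 / (p : ℝ)) * n * p⌉₊
  have hevent : {ω | Real.log (1 / (p : ℝ)) * n * (p : ℝ) <
        ((Finset.univ.filter (fun u => ¬ GoodVertex (p : ℝ) ω u)).card : ℝ)} ⊆
      {ω | ∃ B : Finset (Fin n), #B = k ∧
        ⌈7 * n * (p : ℝ) * k / 2⌉₊ ≤ #{e ∈ pairsMeeting B | ω e = true}} := by
    intro ω hω
    simp only [GoodVertex, not_lt, Set.mem_ofPred_eq] at hω
    exact exists_card_pairsMeeting_ge ω (Nat.ceil_le.2 hω.le)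
  calc _ ≤ _ := measure_mono hevent
    _ ≤ _ := erMeasure_exists_card_pairsMeeting_ge_le n p hp k _
    _ ≤ _ := ENNReal.ofReal_le_ofReal <|
        choose_mul_choose_mul_pow_le_exp p.coe_nonneg hlog (Nat.le_ceil _) (Nat.le_ceil _)
end

section
/- If an undirected (simple) graph has $r$ triangles, then it has at least $\frac{1}{2}(6r)^{2/3}$ edges. -/
open Real

open Finset SimpleGraph in
private lemma card_filter_prod_aux {α β : Type*} [Fintype α] [Fintype β] [DecidableEq α]
    (P : α → β → Prop) [∀ x y, Decidable (P x y)] :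
    (univ.filter fun p : α × β => P p.1 p.2).card
      = ∑ x, (univ.filter fun y => P x y).card := by
  rw [Finset.card_eq_sum_card_fiberwise (f := fun p : α × β => p.1) (t := univ)
    (fun _ _ => mem_univ _)]
  refine Finset.sum_congr rfl fun x _ => ?_
  refine Finset.card_nbij' (i := fun p => p.2) (j := fun y => (x, y)) ?_ ?_ ?_ ?_
  · intro p hp; simp at hp ⊢; obtain ⟨h1, h2⟩ := hp; subst h2; exact h1
  · intro y hy; simp at hy ⊢; exact hy
  · intro p hp; obtain ⟨p1, p2⟩ := p; simp at hp; exact congrArg (·, p2) hp.2.symm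
  · intro y hy; rfl

open Finset SimpleGraph in
private lemma six_mul_triangles_le {V : Type*} [Fintype V] [DecidableEq V]
    (G : SimpleGraph V) [DecidableRel G.Adj] :
    6 * (G.cliqueFinset 3).card ≤
      (univ.filter fun p : V × V × V =>
        G.Adj p.1 p.2.1 ∧ G.Adj p.1 p.2.2 ∧ G.Adj p.2.1 p.2.2).card := by
  set T := (univ.filter fun p : V × V × V =>
        G.Adj p.1 p.2.1 ∧ G.Adj p.1 p.2.2 ∧ G.Adj p.2.1 p.2.2) with hT
  have hmap : ∀ p ∈ T, ({p.1, p.2.1, p.2.2} : Finset V) ∈ G.cliqueFinset 3 := by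
    intro p hp
    simp only [hT, mem_filter, mem_univ, true_and] at hp
    rw [mem_cliqueFinset_iff, is3Clique_triple_iff]
    exact hp
  have hfib : ∀ s ∈ G.cliqueFinset 3,
      6 ≤ (T.filter fun p => ({p.1, p.2.1, p.2.2} : Finset V) = s).card := by
    intro s hs
    rw [mem_cliqueFinset_iff, is3Clique_iff] at hs
    obtain ⟨a, b, c, hab, hac, hbc, rfl⟩ := hs
    have hsub : ({(a,b,c),(a,c,b),(b,a,c),(b,c,a),(c,a,b),(c,b,a)} : Finset (V×V×V))
        ⊆ T.filter fun p => ({p.1, p.2.1, p.2.2} : Finset V) = {a, b, c} := by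
      intro p hp
      simp only [mem_insert, mem_singleton] at hp
      rcases hp with rfl|rfl|rfl|rfl|rfl|rfl <;>
        simp only [hT, mem_filter, mem_univ, true_and] <;>
        refine ⟨⟨?_, ?_, ?_⟩, ?_⟩ <;>
        first
          | exact hab | exact hab.symm | exact hac | exact hac.symm
          | exact hbc | exact hbc.symm | trivial
          | (ext x; simp; tauto)
    have hcard : ({(a,b,c),(a,c,b),(b,a,c),(b,c,a),(c,a,b),(c,b,a)} : Finset (V×V×V)).card = 6 := by
      have h1 := hab.ne
      have h2 := hac.ne
      have h3 := hbc.ne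
      repeat rw [Finset.card_insert_of_notMem (by simp [Prod.ext_iff]; tauto)]
      simp
    calc 6 = _ := hcard.symm
    _ ≤ _ := Finset.card_le_card hsub
  calc 6 * (G.cliqueFinset 3).card = ∑ _s ∈ G.cliqueFinset 3, 6 := by
        rw [Finset.sum_const, smul_eq_mul, mul_comm]
    _ ≤ ∑ s ∈ G.cliqueFinset 3, (T.filter fun p => ({p.1, p.2.1, p.2.2} : Finset V) = s).card :=
        Finset.sum_le_sum hfib
    _ = T.card := (Finset.card_eq_sum_card_fiberwise hmap).symm

/-- **Lemma 8.1** (second assertion): a simple graph with `r` triangles has at least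
`(6r)^{2/3} / 2` edges. -/
theorem edge_count_lower_bound_of_triangles {V : Type*} [Fintype V] [DecidableEq V]
    (G : SimpleGraph V) [DecidableRel G.Adj] :
    (1 / 2 : ℝ) * (6 * ((G.cliqueFinset 3).card : ℝ)) ^ ((2 : ℝ) / 3) ≤
      (G.edgeFinset.card : ℝ) := by
  classical
  open Finset SimpleGraph in
  -- notation
  set m : ℕ := G.edgeFinset.card with hm
  set t : ℕ := (G.cliqueFinset 3).card with ht
  -- s x : ordered pairs (y, z) forming a triangle with x
  set s : V → ℕ := fun x =>
    (univ.filter fun yz : V × V => G.Adj x yz.1 ∧ G.Adj x yz.2 ∧ G.Adj yz.1 yz.2).card with hs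
  -- the count of ordered adjacent pairs is 2m
  have hA : (univ.filter fun yz : V × V => G.Adj yz.1 yz.2).card = 2 * m := by
    rw [card_filter_prod_aux (fun x y => G.Adj x y)]
    have : ∀ x : V, (univ.filter fun y => G.Adj x y).card = G.degree x := by
      intro x
      rw [← SimpleGraph.card_neighborFinset_eq_degree]
      congr 1
      ext y
      simp [SimpleGraph.mem_neighborFinset]
    simp_rw [this]
    rw [G.sum_degrees_eq_twice_card_edges]
  -- 6t ≤ ∑ x, s x
  have h6t : 6 * t ≤ ∑ x, s x := by
    have := six_mul_triangles_le G
    rwa [card_filter_prod_aux (fun (x : V) (yz : V × V) => G.Adj x yz.1 ∧ G.Adj x yz.2 ∧ G.Adj yz.1 yz.2)] at this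
  -- s x ≤ (degree x)^2
  have hsd : ∀ x : V, s x ≤ G.degree x * G.degree x := by
    intro x
    have hsub : (univ.filter fun yz : V × V => G.Adj x yz.1 ∧ G.Adj x yz.2 ∧ G.Adj yz.1 yz.2)
        ⊆ (G.neighborFinset x) ×ˢ (G.neighborFinset x) := by
      intro yz hyz
      simp only [mem_filter, mem_univ, true_and] at hyz
      simp [Finset.mem_product, SimpleGraph.mem_neighborFinset, hyz.1, hyz.2.1]
    calc s x ≤ ((G.neighborFinset x) ×ˢ (G.neighborFinset x)).card := Finset.card_le_card hsub
      _ = G.degree x * G.degree x := by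
          rw [Finset.card_product, SimpleGraph.card_neighborFinset_eq_degree]
  -- s x ≤ 2m
  have hsm : ∀ x : V, s x ≤ 2 * m := by
    intro x
    rw [← hA]
    apply Finset.card_le_card
    intro yz hyz
    simp only [mem_filter, mem_univ, true_and] at hyz ⊢
    exact hyz.2.2
  -- real-valued bound : 6t ≤ (2m) * sqrt (2m)
  have key : (6 * t : ℝ) ≤ (2 * m) * Real.sqrt (2 * m) := by
    have h1 : (6 * t : ℝ) ≤ ∑ x, (s x : ℝ) := by
      rw [← Nat.cast_sum]
      exact_mod_cast h6t
    have h2 : ∀ x : V, (s x : ℝ) ≤ (G.degree x : ℝ) * Real.sqrt (2 * m) := by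
      intro x
      have hnn : (0:ℝ) ≤ (s x : ℝ) := by positivity
      have e1 : (s x : ℝ) = Real.sqrt (s x) * Real.sqrt (s x) := (Real.mul_self_sqrt hnn).symm
      have b1 : Real.sqrt (s x) ≤ (G.degree x : ℝ) := by
        have : Real.sqrt (s x) ≤ Real.sqrt ((G.degree x : ℝ) * (G.degree x : ℝ)) := by
          apply Real.sqrt_le_sqrt
          exact_mod_cast hsd x
        rwa [Real.sqrt_mul_self (by positivity)] at this
      have b2 : Real.sqrt (s x) ≤ Real.sqrt (2 * m) := by
        apply Real.sqrt_le_sqrt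
        exact_mod_cast hsm x
      calc (s x : ℝ) = Real.sqrt (s x) * Real.sqrt (s x) := e1
        _ ≤ (G.degree x : ℝ) * Real.sqrt (2 * m) :=
            mul_le_mul b1 b2 (Real.sqrt_nonneg _) (by positivity)
    have h3 : ∑ x, (s x : ℝ) ≤ ∑ x, (G.degree x : ℝ) * Real.sqrt (2 * m) :=
      Finset.sum_le_sum fun x _ => h2 x
    have h4 : ∑ x, (G.degree x : ℝ) * Real.sqrt (2 * m) = (2 * m) * Real.sqrt (2 * m) := by
      rw [← Finset.sum_mul]
      congr 1
      rw [← Nat.cast_sum]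
      rw [G.sum_degrees_eq_twice_card_edges]
      push_cast
      ring
    linarith
  -- finish with rpow algebra
  rcases Nat.eq_zero_or_pos m with hm0 | hmpos
  · have ht0 : (t : ℝ) = 0 := by
      have : (6 * t : ℝ) ≤ 0 := by
        rw [hm0] at key; simpa using key
      have h6 : (0:ℝ) ≤ (6 * t : ℝ) := by positivity
      nlinarith
    rw [ht0, hm0]
    rw [mul_zero, Real.zero_rpow (by norm_num)]
    simp
  · have hb : (0:ℝ) < 2 * m := by positivity
    have key' : (6 * (t:ℝ)) ≤ (2 * m : ℝ) ^ ((3:ℝ)/2) := by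
      have : (2 * m : ℝ) ^ ((3:ℝ)/2) = (2 * m) * Real.sqrt (2 * m) := by
        rw [show (3:ℝ)/2 = 1 + 1/2 by norm_num, Real.rpow_add hb, Real.rpow_one,
          ← Real.sqrt_eq_rpow]
      rw [this]
      exact_mod_cast key
    have hstep : (6 * (t:ℝ)) ^ ((2:ℝ)/3) ≤ ((2 * m : ℝ) ^ ((3:ℝ)/2)) ^ ((2:ℝ)/3) :=
      Real.rpow_le_rpow (by positivity) key' (by norm_num)
    have hsimp : ((2 * m : ℝ) ^ ((3:ℝ)/2)) ^ ((2:ℝ)/3) = 2 * m := by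
      rw [← Real.rpow_mul (le_of_lt hb)]
      norm_num
    rw [hsimp] at hstep
    linarith
end
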